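/- For all x, y, p ∈ I_q the functions a_p satisfy the second-order q-difference equation (κ(p) − κ(y) + y²p²/x²)·a_p(x,y) + (yp/x)·√(1+κ(q⁻¹p))·a_{q⁻¹p}(x,y) + q·(yp/x)·√(1+κ(p))·a_{qp}(x,y) = 0 (with the convention a_p(x,y) = 0 when an argument or subscript lies outside I_q). -/

import Mathlib

open scoped Classical

noncomputable section

/-- The set `I_q = -q^ℕ ∪ q^ℤ`. -/
def Iq (q : ℝ) : Set ℝ :=
  {x | (∃ k : ℕ, x = -q ^ (k + 1)) ∨ ∃ k : ℤ, x = q ^ k}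

/-- `χ(x) = log_q |x|`, the unique integer `k` with `|x| = q^k` (junk value `0` otherwise). -/
def chi (q x : ℝ) : ℤ :=
  if h : ∃ k : ℤ, |x| = q ^ k then h.choose else 0

/-- `κ(x) = sgn(x)·x²`. -/
def kappa (x : ℝ) : ℝ := Real.sign x * x ^ 2

/-- `ν(t) = q^{(χ(t)-1)(χ(t)-2)/2}`. -/
def nu (q t : ℝ) : ℝ := q ^ ((chi q t - 1) * (chi q t - 2) / 2)

/-- The sign factor `s(x,y)`. -/
def sfac (x y : ℝ) : ℝ := if 0 < x ∧ y < 0 then -1 else 1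

/-- The infinite q-shifted factorial `(a;q)_∞`. -/
def qPoch (a q : ℝ) : ℝ := ∏' k : ℕ, (1 - a * q ^ k)

/-- The finite q-shifted factorial `(a;q)_n`. -/
def qPochN (a q : ℝ) (n : ℕ) : ℝ := ∏ k ∈ Finset.range n, (1 - a * q ^ k)

/-- `Ψ(a;b;q,z) = Σ_{n≥0} ((a;q)_n (b q^n;q)_∞/(q;q)_n)·(-1)^n q^{n(n-1)/2} z^n`. -/
def Psi (a b q z : ℝ) : ℝ :=
  ∑' n : ℕ, qPochN a q n * qPoch (b * q ^ n) q / qPochN q q n *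
    ((-1) ^ n * q ^ (n * (n - 1) / 2) * z ^ n)

/-- The normalization constant `c_q`. -/
def cq (q : ℝ) : ℝ :=
  (Real.sqrt 2 * q * (qPoch (q ^ 2) (q ^ 2) * qPoch (-q ^ 2) (q ^ 2)))⁻¹

/-- The functions `a_p(x,y)`, with the convention that `a_p(x,y) = 0` whenever an
argument or the subscript lies outside `I_q`, or when `sgn(xy) ≠ sgn(p)`. -/
def ap (q p x y : ℝ) : ℝ :=
  if p ∈ Iq q ∧ x ∈ Iq q ∧ y ∈ Iq q ∧ Real.sign (x * y) = Real.sign p then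
    cq q * sfac x y * (-1 : ℝ) ^ chi q p * (-Real.sign y) ^ chi q x * |y| *
      nu q (p * y / x) *
      Real.sqrt (qPoch (-kappa p) (q ^ 2) * qPoch (-kappa y) (q ^ 2) /
        qPoch (-kappa x) (q ^ 2)) *
      Psi (-q ^ 2 / kappa y) (q ^ 2 * kappa (x / y)) (q ^ 2) (q ^ 2 * kappa (x / p))
  else 0

end

/-!
Put `w = yp/x`, which is positive because `sgn(xy) = sgn p`. Replacing `p` by `qp` multiplies
`(-1)^χ(p)` by `-1` and `ν(w)` by `w/q`, splits the factor `1 + κ(p)` off `(-κ(p);q²)_∞`, and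
divides the argument `z = q²κ(x/p)` of `Ψ` by `q²`; replacing `p` by `p/q` does the reverse.
After these substitutions the claimed identity is `w²/q²` times the contiguous relation (`Q = q²`)
`(Q + b - z) Ψ(a;b;Q,z) + (az - b) Ψ(a;b;Q,Qz) - Q Ψ(a;b;Q,z/Q) = 0`, which holds coefficientwise
for the power series `Ψ`. For `p = -q` the subscript `p/q = -1` leaves `I_q`, but then the factor
`√(1 + κ(p/q))` vanishes.
-/

open Filter Topology

section QPochhammer

variable {Q : ℝ}

theorem multipliable_qPoch (hQ0 : 0 ≤ Q) (hQ1 : Q < 1) (a : ℝ) :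
    Multipliable fun k : ℕ => 1 - a * Q ^ k := by
  simpa [sub_eq_add_neg] using
    Real.multipliable_one_add_of_summable ((summable_geometric_of_lt_one hQ0 hQ1).mul_left (-a))

theorem qPoch_eq_one_sub_mul (hQ0 : 0 ≤ Q) (hQ1 : Q < 1) (a : ℝ) :
    qPoch a Q = (1 - a) * qPoch (a * Q) Q := by
  have hshift : (fun k : ℕ => 1 - a * Q ^ (k + 1)) = fun k => 1 - a * Q * Q ^ k := by
    ext k; ring
  rw [qPoch, tprod_eq_zero_mul' (hshift ▸ multipliable_qPoch hQ0 hQ1 (a * Q)), hshift,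
    pow_zero, mul_one, qPoch]

theorem qPoch_pos (hQ0 : 0 ≤ Q) (hQ1 : Q < 1) {a : ℝ} (h : ∀ k : ℕ, 0 < 1 - a * Q ^ k) :
    0 < qPoch a Q := by
  have hlog : Summable fun k : ℕ => Real.log (1 - a * Q ^ k) := by
    simpa [sub_eq_add_neg] using Real.summable_log_one_add_of_summable
      ((summable_geometric_of_lt_one hQ0 hQ1).mul_left (-a))
  rw [qPoch, ← Real.rexp_tsum_eq_tprod h hlog]
  exact Real.exp_pos _

theorem abs_qPochN_le (hQ0 : 0 ≤ Q) (hQ1 : Q < 1) (a : ℝ) (n : ℕ) :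
    |qPochN a Q n| ≤ Real.exp (|a| / (1 - Q)) := by
  have hfactor (k : ℕ) : |1 - a * Q ^ k| ≤ 1 + |a| * Q ^ k := by
    simpa [abs_mul, abs_of_nonneg (pow_nonneg hQ0 k)] using abs_sub (1 : ℝ) (a * Q ^ k)
  have hgeom : ∑ k ∈ Finset.range n, |a| * Q ^ k ≤ |a| / (1 - Q) := by
    have h := (summable_geometric_of_lt_one hQ0 hQ1).sum_le_tsum (Finset.range n)
      fun k _ => pow_nonneg hQ0 k
    rw [tsum_geometric_of_lt_one hQ0 hQ1] at h
    rw [← Finset.mul_sum, div_eq_mul_inv]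
    exact mul_le_mul_of_nonneg_left h (abs_nonneg a)
  calc |qPochN a Q n| = ∏ k ∈ Finset.range n, |1 - a * Q ^ k| := Finset.abs_prod _ _
    _ ≤ ∏ k ∈ Finset.range n, (1 + |a| * Q ^ k) :=
      Finset.prod_le_prod (fun k _ => abs_nonneg _) fun k _ => hfactor k
    _ ≤ Real.exp (∑ k ∈ Finset.range n, |a| * Q ^ k) :=
      Real.prod_one_add_le_exp_sum _ fun k => by positivity
    _ ≤ Real.exp (|a| / (1 - Q)) := Real.exp_le_exp.2 hgeom

theorem tendsto_qPochN (hQ0 : 0 ≤ Q) (hQ1 : Q < 1) (a : ℝ) :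
    Tendsto (qPochN a Q) atTop (𝓝 (qPoch a Q)) :=
  (multipliable_qPoch hQ0 hQ1 a).hasProd.tendsto_prod_nat

theorem abs_qPoch_le (hQ0 : 0 ≤ Q) (hQ1 : Q < 1) (a : ℝ) :
    |qPoch a Q| ≤ Real.exp (|a| / (1 - Q)) :=
  le_of_tendsto' ((continuous_abs.tendsto _).comp (tendsto_qPochN hQ0 hQ1 a))
    fun n => abs_qPochN_le hQ0 hQ1 a n

theorem qPoch_le_qPochN (hQ0 : 0 ≤ Q) (hQ1 : Q < 1) (n : ℕ) : qPoch Q Q ≤ qPochN Q Q n := by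
  refine Antitone.le_of_tendsto (antitone_nat_of_succ_le fun k => ?_) (tendsto_qPochN hQ0 hQ1 Q) n
  have hnonneg : 0 ≤ qPochN Q Q k :=
    Finset.prod_nonneg fun j _ => by
      rw [← pow_succ']; exact sub_nonneg.2 (pow_le_one₀ hQ0 hQ1.le)
  rw [qPochN, Finset.prod_range_succ, ← qPochN]
  exact mul_le_of_le_one_right hnonneg (sub_le_self _ (by positivity))

theorem qPoch_self_pos (hQ0 : 0 ≤ Q) (hQ1 : Q < 1) : 0 < qPoch Q Q :=
  qPoch_pos hQ0 hQ1 fun k => by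
    rw [← pow_succ']; exact sub_pos.2 (pow_lt_one₀ hQ0 hQ1 k.succ_ne_zero)

theorem qPochN_self_pos (hQ0 : 0 ≤ Q) (hQ1 : Q < 1) (n : ℕ) : 0 < qPochN Q Q n :=
  (qPoch_self_pos hQ0 hQ1).trans_le (qPoch_le_qPochN hQ0 hQ1 n)

end QPochhammer

section Psi

variable {Q : ℝ}

noncomputable def psiCoeff (a b Q : ℝ) (n : ℕ) : ℝ :=
  qPochN a Q n * qPoch (b * Q ^ n) Q / qPochN Q Q n * ((-1) ^ n * Q ^ (n * (n - 1) / 2))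

theorem Psi_eq_tsum (a b Q z : ℝ) : Psi a b Q z = ∑' n : ℕ, psiCoeff a b Q n * z ^ n :=
  tsum_congr fun n => by rw [psiCoeff]; ring

theorem summable_pow_triangle_mul_pow (hQ0 : 0 ≤ Q) (hQ1 : Q < 1) (r : ℝ) :
    Summable fun n : ℕ => Q ^ (n * (n - 1) / 2) * r ^ n := by
  have hratio : Tendsto (fun n : ℕ => ‖Q ^ n * r‖) atTop (𝓝 0) := by
    simpa using ((tendsto_pow_atTop_nhds_zero_of_lt_one hQ0 hQ1).mul_const r).norm
  refine summable_of_ratio_norm_eventually_le (r := 1 / 2) (by norm_num) ?_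
  filter_upwards [hratio.eventually_le_const (by norm_num : (0 : ℝ) < 1 / 2)] with n hn
  calc ‖Q ^ ((n + 1) * (n + 1 - 1) / 2) * r ^ (n + 1)‖
      = ‖Q ^ n * r‖ * ‖Q ^ (n * (n - 1) / 2) * r ^ n‖ := by
        rw [Nat.triangle_succ, ← norm_mul]; ring_nf
    _ ≤ 1 / 2 * ‖Q ^ (n * (n - 1) / 2) * r ^ n‖ := by gcongr

theorem abs_psiCoeff_le (hQ0 : 0 ≤ Q) (hQ1 : Q < 1) (a b : ℝ) (n : ℕ) :
    |psiCoeff a b Q n| ≤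
      Real.exp (|a| / (1 - Q)) * Real.exp (|b| / (1 - Q)) / qPoch Q Q * Q ^ (n * (n - 1) / 2) := by
  have htail : |qPoch (b * Q ^ n) Q| ≤ Real.exp (|b| / (1 - Q)) := by
    refine (abs_qPoch_le hQ0 hQ1 _).trans (Real.exp_le_exp.2 ?_)
    rw [abs_mul, abs_of_nonneg (pow_nonneg hQ0 n)]
    gcongr
    exact mul_le_of_le_one_right (abs_nonneg b) (pow_le_one₀ hQ0 hQ1.le)
  rw [psiCoeff, abs_mul, abs_div, abs_mul, abs_mul, abs_pow, abs_neg, abs_one, one_pow, one_mul,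
    abs_of_nonneg (pow_nonneg hQ0 _), abs_of_pos (qPochN_self_pos hQ0 hQ1 n)]
  gcongr
  · exact qPoch_self_pos hQ0 hQ1
  · exact abs_qPochN_le hQ0 hQ1 a n
  · exact qPoch_le_qPochN hQ0 hQ1 n

theorem summable_psiCoeff_mul_pow (hQ0 : 0 ≤ Q) (hQ1 : Q < 1) (a b z : ℝ) :
    Summable fun n : ℕ => psiCoeff a b Q n * z ^ n := by
  refine .of_norm_bounded ((summable_pow_triangle_mul_pow hQ0 hQ1 |z|).mul_left
    (Real.exp (|a| / (1 - Q)) * Real.exp (|b| / (1 - Q)) / qPoch Q Q)) fun n => ?_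
  rw [norm_mul, norm_pow, Real.norm_eq_abs, Real.norm_eq_abs, ← mul_assoc]
  gcongr
  exact abs_psiCoeff_le hQ0 hQ1 a b n

theorem psiCoeff_succ_mul (hQ0 : 0 < Q) (hQ1 : Q < 1) (a b : ℝ) (n : ℕ) :
    psiCoeff a b Q (n + 1) * (Q + b - b * Q ^ (n + 1) - Q / Q ^ (n + 1)) =
      psiCoeff a b Q n * (1 - a * Q ^ n) := by
  have hnum : qPochN a Q (n + 1) = qPochN a Q n * (1 - a * Q ^ n) := Finset.prod_range_succ _ n
  have hden : qPochN Q Q (n + 1) = qPochN Q Q n * (1 - Q * Q ^ n) := Finset.prod_range_succ _ n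
  have htail : qPoch (b * Q ^ n) Q = (1 - b * Q ^ n) * qPoch (b * Q ^ (n + 1)) Q := by
    rw [qPoch_eq_one_sub_mul hQ0.le hQ1, mul_assoc, ← pow_succ]
  have hfactor : 1 - Q * Q ^ n ≠ 0 := by
    rw [← pow_succ']; exact (sub_pos.2 (pow_lt_one₀ hQ0.le hQ1 n.succ_ne_zero)).ne'
  have hden_ne : qPochN Q Q n ≠ 0 := (qPochN_self_pos hQ0.le hQ1 n).ne'
  have hQ : Q ≠ 0 := hQ0.ne'
  rw [psiCoeff, psiCoeff, hnum, hden, htail, Nat.triangle_succ]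
  generalize hf : 1 - Q * Q ^ n = f at hfactor ⊢
  field_simp
  rw [← hf]
  ring

theorem Psi_recurrence (hQ0 : 0 < Q) (hQ1 : Q < 1) (a b z : ℝ) :
    (Q + b - z) * Psi a b Q z + (a * z - b) * Psi a b Q (Q * z) - Q * Psi a b Q (z / Q) = 0 := by
  set c := psiCoeff a b Q
  have hz := summable_psiCoeff_mul_pow hQ0.le hQ1 a b z
  have hQz := summable_psiCoeff_mul_pow hQ0.le hQ1 a b (Q * z)
  have hzQ := summable_psiCoeff_mul_pow hQ0.le hQ1 a b (z / Q)
  set F : ℕ → ℝ := fun n => (Q + b) * (c n * z ^ n) - b * (c n * (Q * z) ^ n) -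
    Q * (c n * (z / Q) ^ n)
  set G : ℕ → ℝ := fun n => a * z * (c n * (Q * z) ^ n) - z * (c n * z ^ n)
  have hF : Summable F := ((hz.mul_left _).sub (hQz.mul_left _)).sub (hzQ.mul_left _)
  have hG : Summable G := (hQz.mul_left _).sub (hz.mul_left _)
  have hF_zero : F 0 = 0 := by simp only [F, pow_zero]; ring
  have hF_succ (n : ℕ) : F (n + 1) = -G n := by
    simp only [F, G, c]
    linear_combination z ^ (n + 1) * psiCoeff_succ_mul hQ0 hQ1 a b n
  have hsplit : (Q + b - z) * Psi a b Q z + (a * z - b) * Psi a b Q (Q * z) -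
      Q * Psi a b Q (z / Q) = ∑' n, (F n + G n) := by
    rw [Psi_eq_tsum, Psi_eq_tsum, Psi_eq_tsum, ← tsum_mul_left, ← tsum_mul_left,
      ← tsum_mul_left, ← (hz.mul_left _).tsum_add (hQz.mul_left _),
      ← ((hz.mul_left _).add (hQz.mul_left _)).tsum_sub (hzQ.mul_left _)]
    exact tsum_congr fun n => by simp only [F, G]; ring
  rw [hsplit, hF.tsum_add hG, hF.tsum_eq_zero_add, hF_zero, tsum_congr hF_succ, tsum_neg]
  ring

theorem Psi_recurrence_rescaled (hQ0 : 0 < Q) (hQ1 : Q < 1) {X Y P : ℝ} (hX : X ≠ 0)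
    (hY : Y ≠ 0) (hP : P ≠ 0) :
    (P - Y + P * Y / X) * Psi (-Q / Y) (Q * (X / Y)) Q (Q * (X / P)) -
      (Q + P) * Psi (-Q / Y) (Q * (X / Y)) Q (Q * (Q * (X / P))) -
      P * Y / X * Psi (-Q / Y) (Q * (X / Y)) Q (Q * (X / P) / Q) = 0 := by
  linear_combination (norm := skip)
    (P * Y / X / Q) * Psi_recurrence hQ0 hQ1 (-Q / Y) (Q * (X / Y)) (Q * (X / P))
  field_simp
  ring

end Psi

section Lattice

variable {q : ℝ}

/-- The domain `-q^ℤ ∪ q^ℤ` of `χ`. -/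
def qLattice (q : ℝ) : Set ℝ := {t | ∃ k : ℤ, |t| = q ^ k}

theorem mul_mem_qLattice {s t : ℝ} (hq : q ≠ 0) (hs : s ∈ qLattice q)
    (ht : t ∈ qLattice q) : s * t ∈ qLattice q := by
  obtain ⟨k, hk⟩ := hs
  obtain ⟨l, hl⟩ := ht
  exact ⟨k + l, by rw [abs_mul, hk, hl, zpow_add₀ hq]⟩

theorem div_mem_qLattice {s t : ℝ} (hq : q ≠ 0) (hs : s ∈ qLattice q)
    (ht : t ∈ qLattice q) : s / t ∈ qLattice q := by
  obtain ⟨k, hk⟩ := hs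
  obtain ⟨l, hl⟩ := ht
  exact ⟨k - l, by rw [abs_div, hk, hl, zpow_sub₀ hq]⟩

theorem mem_qLattice_of_mem_Iq (hq0 : 0 < q) {x : ℝ} (hx : x ∈ Iq q) : x ∈ qLattice q := by
  rcases hx with ⟨k, rfl⟩ | ⟨k, rfl⟩
  · refine ⟨k + 1, ?_⟩
    rw [abs_neg, abs_of_pos (by positivity), ← zpow_natCast]
    push_cast; rfl
  · exact ⟨k, abs_of_pos (zpow_pos hq0 k)⟩

theorem ne_zero_of_mem_qLattice (hq0 : 0 < q) {t : ℝ} (ht : t ∈ qLattice q) : t ≠ 0 := by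
  obtain ⟨k, hk⟩ := ht
  exact abs_pos.1 (hk ▸ zpow_pos hq0 k)

theorem chi_eq_of_abs_eq_zpow (hq0 : 0 < q) (hq1 : q < 1) {x : ℝ} {k : ℤ} (h : |x| = q ^ k) :
    chi q x = k := by
  have hex : ∃ j : ℤ, |x| = q ^ j := ⟨k, h⟩
  rw [chi, dif_pos hex]
  exact zpow_right_injective₀ hq0 hq1.ne (hex.choose_spec.symm.trans h)

theorem chi_q_mul (hq0 : 0 < q) (hq1 : q < 1) {x : ℝ} (hx : x ∈ qLattice q) :
    chi q (q * x) = chi q x + 1 := by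
  obtain ⟨k, hk⟩ := hx
  rw [chi_eq_of_abs_eq_zpow hq0 hq1 hk, chi_eq_of_abs_eq_zpow hq0 hq1 (k := k + 1)]
  rw [abs_mul, abs_of_pos hq0, hk, zpow_add_one₀ hq0.ne', mul_comm]

theorem nu_q_mul (hq0 : 0 < q) (hq1 : q < 1) {w : ℝ} (hw : w ∈ qLattice q) :
    nu q (q * w) = nu q w * (|w| / q) := by
  obtain ⟨k, hk⟩ := hw
  have htri : k * (k - 1) / 2 = (k - 1) * (k - 2) / 2 + (k - 1) := by
    rw [← Int.add_mul_ediv_right _ _ two_ne_zero]; ring_nf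
  rw [nu, nu, chi_q_mul hq0 hq1 ⟨k, hk⟩, chi_eq_of_abs_eq_zpow hq0 hq1 hk, hk,
    div_eq_mul_inv, ← zpow_sub_one₀ hq0.ne', ← zpow_add₀ hq0.ne', ← htri]
  ring_nf

end Lattice

section Kappa

theorem kappa_eq_mul_abs (t : ℝ) : kappa t = t * |t| := by
  rcases lt_trichotomy t 0 with ht | rfl | ht
  · rw [kappa, Real.sign_of_neg ht, abs_of_neg ht]; ring
  · simp [kappa]
  · rw [kappa, Real.sign_of_pos ht, abs_of_pos ht]; ring

theorem kappa_mul (s t : ℝ) : kappa (s * t) = kappa s * kappa t := by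
  simp only [kappa_eq_mul_abs, abs_mul]; ring

theorem kappa_div (s t : ℝ) : kappa (s / t) = kappa s / kappa t := by
  simp only [kappa_eq_mul_abs, abs_div]; ring

theorem kappa_of_nonneg {t : ℝ} (ht : 0 ≤ t) : kappa t = t ^ 2 := by
  rw [kappa_eq_mul_abs, abs_of_nonneg ht, sq]

theorem kappa_ne_zero {t : ℝ} (ht : t ≠ 0) : kappa t ≠ 0 := by
  rw [kappa_eq_mul_abs]; exact mul_ne_zero ht (abs_ne_zero.2 ht)

theorem one_add_kappa_nonneg {t : ℝ} (ht : -1 ≤ t) : 0 ≤ 1 + kappa t := by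
  rw [kappa_eq_mul_abs]
  rcases le_total 0 t with h | h
  · positivity
  · rw [abs_of_nonpos h]; nlinarith

end Kappa

section Ap

variable {q : ℝ}

theorem sign_mul_of_pos {c : ℝ} (hc : 0 < c) (t : ℝ) : Real.sign (c * t) = Real.sign t := by
  rcases lt_trichotomy t 0 with ht | rfl | ht
  · rw [Real.sign_of_neg ht, Real.sign_of_neg (mul_neg_of_pos_of_neg hc ht)]
  · simp
  · rw [Real.sign_of_pos ht, Real.sign_of_pos (mul_pos hc ht)]

theorem pos_mul_of_sign_eq {s t : ℝ} (hs : s ≠ 0) (h : Real.sign s = Real.sign t) :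
    0 < s * t := by
  rcases hs.lt_or_gt with hs | hs <;> rcases lt_trichotomy t 0 with ht | rfl | ht <;>
    simp [Real.sign_of_neg, Real.sign_of_pos, *] at h ⊢ <;> nlinarith

theorem neg_le_of_mem_Iq (hq0 : 0 < q) (hq1 : q < 1) {x : ℝ} (hx : x ∈ Iq q) : -q ≤ x := by
  rcases hx with ⟨k, rfl⟩ | ⟨k, rfl⟩
  · rw [neg_le_neg_iff, pow_succ']
    exact mul_le_of_le_one_right hq0.le (pow_le_one₀ hq0.le hq1.le)
  · linarith [zpow_pos hq0 k]

theorem q_mul_mem_Iq (hq : q ≠ 0) {x : ℝ} (hx : x ∈ Iq q) : q * x ∈ Iq q := by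
  rcases hx with ⟨k, rfl⟩ | ⟨k, rfl⟩
  · exact Or.inl ⟨k + 1, by ring⟩
  · exact Or.inr ⟨k + 1, by rw [zpow_add_one₀ hq, mul_comm]⟩

theorem div_q_mem_Iq_or_eq (hq : q ≠ 0) {x : ℝ} (hx : x ∈ Iq q) :
    x / q ∈ Iq q ∨ x = -q := by
  rcases hx with ⟨_ | k, rfl⟩ | ⟨k, rfl⟩
  · right; ring
  · left; left; exact ⟨k, by field_simp; ring⟩
  · left; right; exact ⟨k - 1, by rw [zpow_sub_one₀ hq, div_eq_mul_inv]⟩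

noncomputable def apCoeff (q p x y : ℝ) : ℝ :=
  cq q * sfac x y * (-1 : ℝ) ^ chi q p * (-Real.sign y) ^ chi q x * |y| * nu q (p * y / x) *
    Real.sqrt (qPoch (-kappa p) (q ^ 2) * qPoch (-kappa y) (q ^ 2) / qPoch (-kappa x) (q ^ 2))

theorem ap_eq_apCoeff_mul {p x y : ℝ}
    (h : p ∈ Iq q ∧ x ∈ Iq q ∧ y ∈ Iq q ∧ Real.sign (x * y) = Real.sign p) :
    ap q p x y = apCoeff q p x y *
      Psi (-q ^ 2 / kappa y) (q ^ 2 * kappa (x / y)) (q ^ 2) (q ^ 2 * kappa (x / p)) := by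
  rw [ap, if_pos h, apCoeff]

theorem ap_eq_zero_of_sign_ne {p x y : ℝ} (h : Real.sign (x * y) ≠ Real.sign p) :
    ap q p x y = 0 :=
  if_neg fun h' => h h'.2.2.2

theorem sqrt_one_add_kappa_mul_apCoeff_q_mul (hq0 : 0 < q) (hq1 : q < 1) {p x y : ℝ}
    (hp : p ∈ qLattice q) (hw : p * y / x ∈ qLattice q) (hp1 : 0 ≤ 1 + kappa p) :
    Real.sqrt (1 + kappa p) * apCoeff q (q * p) x y = -(|p * y / x| / q) * apCoeff q p x y := by
  have hpoch : qPoch (-kappa p) (q ^ 2) = (1 + kappa p) * qPoch (-kappa (q * p)) (q ^ 2) := by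
    rw [qPoch_eq_one_sub_mul (by positivity) (by nlinarith), kappa_mul, kappa_of_nonneg hq0.le]
    ring_nf
  have hsqrt : Real.sqrt (qPoch (-kappa p) (q ^ 2) * qPoch (-kappa y) (q ^ 2) /
        qPoch (-kappa x) (q ^ 2)) = Real.sqrt (1 + kappa p) *
      Real.sqrt (qPoch (-kappa (q * p)) (q ^ 2) * qPoch (-kappa y) (q ^ 2) /
        qPoch (-kappa x) (q ^ 2)) := by
    rw [hpoch, mul_assoc, mul_div_assoc, Real.sqrt_mul hp1]
  rw [apCoeff, apCoeff, chi_q_mul hq0 hq1 hp, zpow_add_one₀ (by norm_num),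
    show q * p * y / x = q * (p * y / x) by ring, nu_q_mul hq0 hq1 hw, hsqrt]
  ring


theorem div_pos_of_sign_mul_eq {x y p : ℝ} (hx : x ≠ 0) (hy : y ≠ 0)
    (hs : Real.sign (x * y) = Real.sign p) : 0 < y * p / x := by
  have h := pos_mul_of_sign_eq (mul_ne_zero hx hy) hs
  rw [show y * p / x = x * y * p / x ^ 2 by field_simp]
  positivity

theorem q_mul_sqrt_mul_ap_q_mul (hq0 : 0 < q) (hq1 : q < 1) {x y p : ℝ}
    (hx : x ∈ Iq q) (hy : y ∈ Iq q) (hp : p ∈ Iq q) (hs : Real.sign (x * y) = Real.sign p) :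
    q * (y * p / x) * Real.sqrt (1 + kappa p) * ap q (q * p) x y =
      -(y * p / x) ^ 2 * apCoeff q p x y *
        Psi (-q ^ 2 / kappa y) (q ^ 2 * kappa (x / y)) (q ^ 2) (q ^ 2 * kappa (x / p) / q ^ 2) := by
  have hq : q ≠ 0 := hq0.ne'
  have hxL := mem_qLattice_of_mem_Iq hq0 hx
  have hpL := mem_qLattice_of_mem_Iq hq0 hp
  have hw := div_pos_of_sign_mul_eq (ne_zero_of_mem_qLattice hq0 hxL)
    (ne_zero_of_mem_qLattice hq0 (mem_qLattice_of_mem_Iq hq0 hy)) hs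
  have harg : q ^ 2 * kappa (x / (q * p)) = q ^ 2 * kappa (x / p) / q ^ 2 := by
    rw [kappa_div, kappa_mul, kappa_of_nonneg hq0.le, kappa_div]
    field_simp
  have hcancel : q * (y * p / x) * -(y * p / x / q) = -(y * p / x) ^ 2 := by field_simp
  rw [ap_eq_apCoeff_mul ⟨q_mul_mem_Iq hq hp, hx, hy, by rw [hs, sign_mul_of_pos hq0]⟩, harg,
    ← mul_assoc, mul_assoc _ (Real.sqrt _),
    sqrt_one_add_kappa_mul_apCoeff_q_mul hq0 hq1 hpL
      (div_mem_qLattice hq (mul_mem_qLattice hq hpL (mem_qLattice_of_mem_Iq hq0 hy)) hxL)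
      (one_add_kappa_nonneg (by linarith [neg_le_of_mem_Iq hq0 hq1 hp])),
    mul_comm p y, abs_of_pos hw]
  linear_combination (apCoeff q p x y *
    Psi (-q ^ 2 / kappa y) (q ^ 2 * kappa (x / y)) (q ^ 2) (q ^ 2 * kappa (x / p) / q ^ 2)) *
      hcancel

theorem sqrt_mul_ap_div_q (hq0 : 0 < q) (hq1 : q < 1) {x y p : ℝ}
    (hx : x ∈ Iq q) (hy : y ∈ Iq q) (hp : p ∈ Iq q) (hs : Real.sign (x * y) = Real.sign p) :
    y * p / x * Real.sqrt (1 + kappa (p / q)) * ap q (p / q) x y =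
      -(q ^ 2 + kappa p) * apCoeff q p x y *
        Psi (-q ^ 2 / kappa y) (q ^ 2 * kappa (x / y)) (q ^ 2)
          (q ^ 2 * (q ^ 2 * kappa (x / p))) := by
  have hq : q ≠ 0 := hq0.ne'
  rcases div_q_mem_Iq_or_eq hq hp with hpq | rfl
  swap
  · have hvanish : 1 + kappa (-q / q) = 0 := by
      rw [neg_div, div_self hq, kappa_eq_mul_abs]; norm_num
    have hvanish' : q ^ 2 + kappa (-q) = 0 := by
      rw [kappa_eq_mul_abs, abs_neg, abs_of_pos hq0]; ring
    rw [hvanish, hvanish']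
    simp
  have hxL := mem_qLattice_of_mem_Iq hq0 hx
  have hpqL := mem_qLattice_of_mem_Iq hq0 hpq
  have hw := div_pos_of_sign_mul_eq (ne_zero_of_mem_qLattice hq0 hxL)
    (ne_zero_of_mem_qLattice hq0 (mem_qLattice_of_mem_Iq hq0 hy)) hs
  have hpq1 : 0 ≤ 1 + kappa (p / q) := one_add_kappa_nonneg (by
    rw [le_div_iff₀ hq0]; linarith [neg_le_of_mem_Iq hq0 hq1 hp])
  have harg : q ^ 2 * kappa (x / (p / q)) = q ^ 2 * (q ^ 2 * kappa (x / p)) := by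
    rw [kappa_div, kappa_div, kappa_div, kappa_of_nonneg hq0.le]
    field_simp
  have hrel := sqrt_one_add_kappa_mul_apCoeff_q_mul hq0 hq1 hpqL
    (div_mem_qLattice hq (mul_mem_qLattice hq hpqL (mem_qLattice_of_mem_Iq hq0 hy)) hxL) hpq1
  rw [mul_div_cancel₀ p hq, show p / q * y / x = y * p / x / q by ring,
    abs_of_pos (by positivity)] at hrel
  have hrel' : q ^ 2 * Real.sqrt (1 + kappa (p / q)) * apCoeff q p x y =
      -(y * p / x) * apCoeff q (p / q) x y := by
    field_simp at hrel ⊢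
    linear_combination hrel
  have hsq : Real.sqrt (1 + kappa (p / q)) ^ 2 = 1 + kappa (p / q) := Real.sq_sqrt hpq1
  have hscale : q ^ 2 * kappa (p / q) = kappa p := by
    rw [kappa_div, kappa_of_nonneg hq0.le]; field_simp
  have hsign : Real.sign (x * y) = Real.sign (p / q) := by
    rw [hs, div_eq_inv_mul, sign_mul_of_pos (inv_pos.2 hq0)]
  rw [ap_eq_apCoeff_mul ⟨hpq, hx, hy, hsign⟩, harg]
  set Ψ := Psi (-q ^ 2 / kappa y) (q ^ 2 * kappa (x / y)) (q ^ 2) (q ^ 2 * (q ^ 2 * kappa (x / p)))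
  linear_combination (Real.sqrt (1 + kappa (p / q)) * Ψ) * hrel' -
    (q ^ 2 * apCoeff q p x y * Ψ) * hsq - (apCoeff q p x y * Ψ) * hscale
theorem ap_recurrence_of_sign_eq (hq0 : 0 < q) (hq1 : q < 1) {x y p : ℝ}
    (hx : x ∈ Iq q) (hy : y ∈ Iq q) (hp : p ∈ Iq q) (hs : Real.sign (x * y) = Real.sign p) :
    (kappa p - kappa y + y ^ 2 * p ^ 2 / x ^ 2) * ap q p x y +
      y * p / x * Real.sqrt (1 + kappa (p / q)) * ap q (p / q) x y +
      q * (y * p / x) * Real.sqrt (1 + kappa p) * ap q (q * p) x y = 0 := by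
  have hx0 := ne_zero_of_mem_qLattice hq0 (mem_qLattice_of_mem_Iq hq0 hx)
  have hy0 := ne_zero_of_mem_qLattice hq0 (mem_qLattice_of_mem_Iq hq0 hy)
  have hp0 := ne_zero_of_mem_qLattice hq0 (mem_qLattice_of_mem_Iq hq0 hp)
  have hw2 : (y * p / x) ^ 2 = kappa p * kappa y / kappa x := by
    rw [← kappa_of_nonneg (div_pos_of_sign_mul_eq hx0 hy0 hs).le, kappa_div, kappa_mul, mul_comm]
  have hrec := Psi_recurrence_rescaled (Q := q ^ 2) (by positivity) (by nlinarith)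
    (kappa_ne_zero hx0) (kappa_ne_zero hy0) (kappa_ne_zero hp0)
  rw [← kappa_div, ← kappa_div] at hrec
  set Ψ := Psi (-q ^ 2 / kappa y) (q ^ 2 * kappa (x / y)) (q ^ 2)
  set z := q ^ 2 * kappa (x / p)
  rw [ap_eq_apCoeff_mul ⟨hp, hx, hy, hs⟩]
  linear_combination sqrt_mul_ap_div_q hq0 hq1 hx hy hp hs +
    q_mul_sqrt_mul_ap_q_mul hq0 hq1 hx hy hp hs + apCoeff q p x y * hrec +
    apCoeff q p x y * (Ψ z - Ψ (z / q ^ 2)) * hw2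

end Ap

theorem stmt2 (q : ℝ) (hq0 : 0 < q) (hq1 : q < 1) (x y p : ℝ)
    (hx : x ∈ Iq q) (hy : y ∈ Iq q) (hp : p ∈ Iq q) :
    (kappa p - kappa y + y ^ 2 * p ^ 2 / x ^ 2) * ap q p x y +
      y * p / x * Real.sqrt (1 + kappa (p / q)) * ap q (p / q) x y +
      q * (y * p / x) * Real.sqrt (1 + kappa p) * ap q (q * p) x y = 0 := by
  by_cases hs : Real.sign (x * y) = Real.sign p
  · exact ap_recurrence_of_sign_eq hq0 hq1 hx hy hp hs
  · rw [ap_eq_zero_of_sign_ne hs,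
      ap_eq_zero_of_sign_ne (by rwa [div_eq_inv_mul, sign_mul_of_pos (inv_pos.2 hq0)]),
      ap_eq_zero_of_sign_ne (by rwa [sign_mul_of_pos hq0])]
    ring
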